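/- Let G = (V, E) be a graph with V = {v_1, ..., v_n}, E = {e_1, ..., e_m}, and k ≥ 0. Construct a bipartite graph G' with vertices a_1, ..., a_n, a_1', ..., a_n', b_1, ..., b_m, b_1', ..., b_m', edges {a_i, a_i'} for all i, {b_j, b_j'} for all j, and {a_i, b_j} whenever e_j is incident to v_i. Then G has a vertex cover of size at most k if and only if there exists an independent set L of G' contained in {a_i} ∪ {a_i'} with |L ∩ {a_1,...,a_n}| ≤ k, |L ∩ {a_1',...,a_n'}| ≥ n − k, and every b_j has a neighbor in L. -/
import Mathlib


/-- The bipartite graph `G'` of the reduction: vertices `a_v`, `a'_v` (for `v ∈ V`)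
and `b_e`, `b'_e` (for edges `e` of `H`), with edges `{a_v, a'_v}`, `{b_e, b'_e}`,
and `{a_v, b_e}` whenever `e` is incident to `v`. -/
def bipRed {V : Type*} (H : SimpleGraph V) :
    SimpleGraph ((V ⊕ V) ⊕ (H.edgeSet ⊕ H.edgeSet)) :=
  SimpleGraph.fromRel fun x y =>
    match x, y with
    | Sum.inl (Sum.inl v), Sum.inl (Sum.inr w) => v = w
    | Sum.inr (Sum.inl e), Sum.inr (Sum.inr f) => e = f
    | Sum.inl (Sum.inl v), Sum.inr (Sum.inl e) => v ∈ (e : Sym2 V)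
    | _, _ => False

/-- `H` has a vertex cover of size at most `k` iff in the bipartite
reduced graph there is an independent set `L` contained in the `a`/`a'` vertices
with at most `k` vertices of type `a`, at least `n - k` vertices of type `a'`,
such that every `b_e` has a neighbor in `L`. -/
theorem stmt_7 {V : Type*} [Fintype V] [DecidableEq V] (H : SimpleGraph V) (k : ℕ) :
    (∃ S : Finset V, S.card ≤ k ∧ ∀ e ∈ H.edgeSet, ∃ v ∈ S, v ∈ e) ↔
    (∃ LA LA' : Finset V,
      LA.card ≤ k ∧ Fintype.card V - k ≤ LA'.card ∧
      ((((fun v => (Sum.inl (Sum.inl v) : (V ⊕ V) ⊕ (H.edgeSet ⊕ H.edgeSet))) '' ↑LA) ∪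
        ((fun v => (Sum.inl (Sum.inr v) : (V ⊕ V) ⊕ (H.edgeSet ⊕ H.edgeSet))) '' ↑LA')).Pairwise
          fun u v => ¬ (bipRed H).Adj u v) ∧
      ∀ e : H.edgeSet, ∃ v ∈ LA,
        (bipRed H).Adj (Sum.inl (Sum.inl v)) (Sum.inr (Sum.inl e))) := by
  constructor
  · rintro ⟨S, hS, hcov⟩
    refine ⟨S, Sᶜ, hS, ?_, ?_, ?_⟩
    · rw [Finset.card_compl]
      exact Nat.sub_le_sub_left hS _
    · rintro x hx y hy hxy
      rcases hx with ⟨u, hu, rfl⟩ | ⟨u, hu, rfl⟩ <;>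
        rcases hy with ⟨w, hw, rfl⟩ | ⟨w, hw, rfl⟩ <;>
        simp only [bipRed, SimpleGraph.fromRel_adj, not_and, not_or] <;> intro _
      · exact ⟨fun h => h.elim, fun h => h.elim⟩
      · refine ⟨fun h => ?_, fun h => h.elim⟩
        subst h
        exact (Finset.mem_compl.mp hw) hu
      · refine ⟨fun h => h.elim, fun h => ?_⟩
        subst h
        exact (Finset.mem_compl.mp hu) hw
      · exact ⟨fun h => h.elim, fun h => h.elim⟩
    · rintro ⟨e, he⟩
      obtain ⟨v, hv, hve⟩ := hcov e he
      exact ⟨v, hv, by simp [bipRed, SimpleGraph.fromRel_adj, hve]⟩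
  · rintro ⟨LA, LA', hLA, _, _, hcov⟩
    refine ⟨LA, hLA, fun e he => ?_⟩
    obtain ⟨v, hv, hadj⟩ := hcov ⟨e, he⟩
    simp only [bipRed, SimpleGraph.fromRel_adj] at hadj
    rcases hadj.2 with h | h
    · exact ⟨v, hv, h⟩
    · exact h.elim
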